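/- Linear convergence of three-operator splitting (Theorem 3): Let d ≥ 1 and let m_f, m_g, m_h ≥ 0 and L_f, L_g, L_h > 0. Let f, g, h : ℝ^d → ℝ be convex with h differentiable, and suppose that f, g, and h each belong to the class F(m,L) in the incremental quadratic-constraint sense: for all x, y and all subgradients p of f at x and q of f at y, ⟪p − q, x − y⟫ ≥ (m_f L_f/(m_f + L_f))‖x − y‖² + (1/(m_f + L_f))‖p − q‖², and the analogous inequalities for (g, m_g, L_g) (with subgradients of g) and for (h, m_h, L_h) (with p = ∇h(x), q = ∇h(y)). Suppose α, λ > 0, ρ ∈ (0,1), and σ₁, σ₂, σ₃ ≥ 0 are such that the 4×4 symmetric real matrix W₂ + σ₁Q₁ + σ₂Q₂ + σ₃Q₃ is negative semidefinite, where W₂ = [[λ², 0, −λ², −λ], [0,0,0,0], [−λ², 0, λ², λ], [−λ, 0, λ, 1−ρ²]], Q₁ = B_gᵀ·Q(m_g,L_g)·B_g with B_g = [[α,0,0,0],[−1,0,0,1]], Q₂ = B_hᵀ·Q(m_h,L_h)·B_h with B_h = [[α,0,0,0],[2,−1,0,−1]], Q₃ = B_fᵀ·Q(m_f,L_f)·B_f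 with B_f = [[0,0,α,0],[0,1,−1,0]], and Q(m,L) = [[−mL/(m+L), 1/2], [1/2, −1/(m+L)]]. Then along any TOS trajectory with stepsize α and relaxation λ that admits a TOS fixed point (z*, x*, y*, p_g*, p_f*), one has for every k ≥ 0: ‖z^k − z*‖² ≤ ρ^{2k} ‖z⁰ − z*‖². -/

import Mathlib

open scoped RealInnerProductSpace
open Matrix

/-- The matrix `Q(m, L)` defining the incremental quadratic constraint for `F(m, L)`. -/
noncomputable def Qml (m L : ℝ) : Matrix (Fin 2) (Fin 2) ℝ :=
  !![-m * L / (m + L), 1 / 2; 1 / 2, -1 / (m + L)]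

/-- The matrix `W₂` appearing in the linear-rate certificate. -/
noncomputable def W2mat (lam ρ : ℝ) : Matrix (Fin 4) (Fin 4) ℝ :=
  !![lam ^ 2, 0, -lam ^ 2, -lam;
     0, 0, 0, 0;
     -lam ^ 2, 0, lam ^ 2, lam;
     -lam, 0, lam, 1 - ρ ^ 2]

noncomputable def BgMat (α : ℝ) : Matrix (Fin 2) (Fin 4) ℝ := !![α, 0, 0, 0; -1, 0, 0, 1]

noncomputable def BhMat (α : ℝ) : Matrix (Fin 2) (Fin 4) ℝ := !![α, 0, 0, 0; 2, -1, 0, -1]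

noncomputable def BfMat (α : ℝ) : Matrix (Fin 2) (Fin 4) ℝ := !![0, 0, α, 0; 0, 1, -1, 0]

/-- `Q₁ = B_gᵀ · Q(m_g, L_g) · B_g`. -/
noncomputable def Q1mat (α m_g L_g : ℝ) : Matrix (Fin 4) (Fin 4) ℝ :=
  (BgMat α)ᵀ * Qml m_g L_g * BgMat α

/-- `Q₂ = B_hᵀ · Q(m_h, L_h) · B_h`. -/
noncomputable def Q2mat (α m_h L_h : ℝ) : Matrix (Fin 4) (Fin 4) ℝ :=
  (BhMat α)ᵀ * Qml m_h L_h * BhMat α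

/-- `Q₃ = B_fᵀ · Q(m_f, L_f) · B_f`. -/
noncomputable def Q3mat (α m_f L_f : ℝ) : Matrix (Fin 4) (Fin 4) ℝ :=
  (BfMat α)ᵀ * Qml m_f L_f * BfMat α

/-!
Put `u = (x_B^k − x*, y^k − y*, x_A^k − x*, z^k − z*) ∈ E⁴`. By the TOS relations, `B_g u`, `B_h u`
and `B_f u` are `α` times (point error, (sub)gradient error) for `g`, `h` and `f`, so the
incremental quadratic constraints make the lifted forms of `Q₁, Q₂, Q₃` at `u` nonnegative, while
`W₂ = Cᵀ diag(1, −ρ²) C` with `C u = (z^{k+1} − z*, z^k − z*)`. Expanding in an orthonormal basis,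
a negative semidefinite matrix has a nonpositive lifted form, so the certificate gives
`‖z^{k+1} − z*‖² ≤ ρ² ‖z^k − z*‖²`; iterate.
-/

variable {E : Type*} [NormedAddCommGroup E] [InnerProductSpace ℝ E] {l m n : ℕ}

/-- The quadratic form of `M ⊗ I` on `Eⁿ`. -/
def gramForm (M : Matrix (Fin n) (Fin n) ℝ) (u : Fin n → E) : ℝ :=
  ∑ i, ∑ j, M i j * ⟪u i, u j⟫

/-- The action of `B ⊗ I : Eⁿ → Eᵐ`. -/
def lincomb (B : Matrix (Fin m) (Fin n) ℝ) (u : Fin n → E) : Fin m → E :=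
  fun k => ∑ i, B k i • u i

lemma gramForm_add (M N : Matrix (Fin n) (Fin n) ℝ) (u : Fin n → E) :
    gramForm (M + N) u = gramForm M u + gramForm N u := by
  simp only [gramForm, Matrix.add_apply, add_mul, Finset.sum_add_distrib]

lemma gramForm_smul (c : ℝ) (M : Matrix (Fin n) (Fin n) ℝ) (u : Fin n → E) :
    gramForm (c • M) u = c * gramForm M u := by
  simp only [gramForm, Matrix.smul_apply, smul_eq_mul, mul_assoc, Finset.mul_sum]

lemma gramForm_smul_right (c : ℝ) (M : Matrix (Fin n) (Fin n) ℝ) (u : Fin n → E) :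
    gramForm M (c • u) = c ^ 2 * gramForm M u := by
  simp only [gramForm, Pi.smul_apply, real_inner_smul_left, real_inner_smul_right, Finset.mul_sum]
  exact Finset.sum_congr rfl fun _ _ => Finset.sum_congr rfl fun _ _ => by ring

lemma gramForm_eq_sum_inner_lincomb (M : Matrix (Fin n) (Fin n) ℝ) (u : Fin n → E) :
    gramForm M u = ∑ i, ⟪u i, lincomb M u i⟫ := by
  simp only [gramForm, lincomb, inner_sum, real_inner_smul_right]

lemma lincomb_mul (A : Matrix (Fin l) (Fin m) ℝ) (B : Matrix (Fin m) (Fin n) ℝ) (u : Fin n → E) :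
    lincomb (A * B) u = lincomb A (lincomb B u) := by
  funext k
  simp only [lincomb, mul_apply, Finset.smul_sum, Finset.sum_smul, smul_smul]
  exact Finset.sum_comm

lemma sum_inner_lincomb_transpose (B : Matrix (Fin m) (Fin n) ℝ) (u : Fin n → E)
    (v : Fin m → E) : ∑ i, ⟪u i, lincomb Bᵀ v i⟫ = ∑ k, ⟪lincomb B u k, v k⟫ := by
  simp only [lincomb, inner_sum, sum_inner, real_inner_smul_left, real_inner_smul_right,
    transpose_apply]
  exact Finset.sum_comm

lemma gramForm_transpose_mul_mul (Q : Matrix (Fin m) (Fin m) ℝ) (B : Matrix (Fin m) (Fin n) ℝ)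
    (u : Fin n → E) : gramForm (Bᵀ * Q * B) u = gramForm Q (lincomb B u) := by
  rw [gramForm_eq_sum_inner_lincomb, gramForm_eq_sum_inner_lincomb, Matrix.mul_assoc,
    lincomb_mul, sum_inner_lincomb_transpose, lincomb_mul]

lemma gramForm_nonpos {M : Matrix (Fin n) (Fin n) ℝ} (hM : ∀ v, v ⬝ᵥ (M *ᵥ v) ≤ 0)
    (u : Fin n → E) : gramForm M u ≤ 0 := by
  let K := Submodule.span ℝ (Set.range u)
  have : FiniteDimensional ℝ K := FiniteDimensional.span_of_finite ℝ (Set.finite_range u)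
  let b := stdOrthonormalBasis ℝ K
  let w : Fin n → K := fun i => ⟨u i, Submodule.subset_span ⟨i, rfl⟩⟩
  have hinner (i j : Fin n) : ⟪u i, u j⟫ = ∑ t, ⟪w i, b t⟫ * ⟪w j, b t⟫ := by
    simp_rw [← real_inner_comm (w j)]
    exact (b.sum_inner_mul_inner (w i) (w j)).symm
  have hexpand :
      gramForm M u = ∑ t, (fun i => ⟪w i, b t⟫) ⬝ᵥ (M *ᵥ fun i => ⟪w i, b t⟫) := by
    simp only [gramForm, hinner, dotProduct, mulVec, Finset.mul_sum]
    refine ((Finset.sum_congr rfl fun i _ => Finset.sum_comm).trans Finset.sum_comm).trans ?_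
    refine Finset.sum_congr rfl fun t _ => Finset.sum_congr rfl fun i _ => ?_
    exact Finset.sum_congr rfl fun j _ => by ring
  rw [hexpand]
  exact Finset.sum_nonpos fun t _ => hM _

lemma gramForm_Qml_nonneg {m L : ℝ} {a b : E}
    (h : m * L / (m + L) * ‖a‖ ^ 2 + 1 / (m + L) * ‖b‖ ^ 2 ≤ ⟪b, a⟫) :
    0 ≤ gramForm (Qml m L) ![a, b] := by
  simp only [gramForm, Qml, Fin.sum_univ_two, of_apply, cons_val', cons_val_zero, cons_val_one,
    empty_val', cons_val_fin_one, real_inner_self_eq_norm_sq, real_inner_comm b a, neg_mul,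
    neg_div]
  linarith

lemma gramForm_diag_one_neg (r : ℝ) (a b : E) :
    gramForm !![1, 0; 0, -r] ![a, b] = ‖a‖ ^ 2 - r * ‖b‖ ^ 2 := by
  simp [gramForm, Fin.sum_univ_two]
  ring

lemma W2mat_eq_transpose_mul_mul (lam ρ : ℝ) :
    W2mat lam ρ = !![-lam, 0, lam, 1; 0, 0, 0, 1]ᵀ * !![1, 0; 0, -ρ ^ 2] *
      !![-lam, 0, lam, 1; 0, 0, 0, 1] := by
  ext i j
  fin_cases i <;> fin_cases j <;> simp [W2mat, mul_apply, Fin.sum_univ_two] <;> ring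

section ErrorVectors

variable {α lam : ℝ} {a b c e p : E}

lemma lincomb_W2_factor :
    lincomb !![-lam, 0, lam, 1; 0, 0, 0, 1] ![a, b, c, e] = ![e + lam • (c - a), e] := by
  ext k
  fin_cases k <;> simp [lincomb, Fin.sum_univ_four, smul_sub, neg_smul]
  abel

lemma lincomb_BgMat (h : e - a = α • p) : lincomb (BgMat α) ![a, b, c, e] = α • ![a, p] := by
  ext k
  fin_cases k <;> simp [lincomb, BgMat, Fin.sum_univ_four, ← h]
  abel

lemma lincomb_BhMat (h : (2 : ℝ) • a - b - e = α • p) :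
    lincomb (BhMat α) ![a, b, c, e] = α • ![a, p] := by
  ext k
  fin_cases k <;> simp [lincomb, BhMat, Fin.sum_univ_four, ← h, two_smul]
  abel

lemma lincomb_BfMat (h : b - c = α • p) : lincomb (BfMat α) ![a, b, c, e] = α • ![c, p] := by
  ext k
  fin_cases k <;> simp [lincomb, BfMat, Fin.sum_univ_four, ← h]
  abel

end ErrorVectors

/-- One step of TOS in error coordinates: `a, b, c, e` are the errors of `x_B, y, x_A, z` and
`pg, ph, pf` those of the (sub)gradients of `g, h, f`. -/
theorem tos_error_contraction {α lam ρ σ₁ σ₂ σ₃ m_f m_g m_h L_f L_g L_h : ℝ}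
    (hσ₁ : 0 ≤ σ₁) (hσ₂ : 0 ≤ σ₂) (hσ₃ : 0 ≤ σ₃)
    (hNSD : ∀ v : Fin 4 → ℝ,
      v ⬝ᵥ ((W2mat lam ρ + σ₁ • Q1mat α m_g L_g + σ₂ • Q2mat α m_h L_h
        + σ₃ • Q3mat α m_f L_f) *ᵥ v) ≤ 0)
    {a b c e pg ph pf : E}
    (hpg : e - a = α • pg) (hph : (2 : ℝ) • a - b - e = α • ph) (hpf : b - c = α • pf)
    (hg : 0 ≤ gramForm (Qml m_g L_g) ![a, pg]) (hh : 0 ≤ gramForm (Qml m_h L_h) ![a, ph])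
    (hf : 0 ≤ gramForm (Qml m_f L_f) ![c, pf]) :
    ‖e + lam • (c - a)‖ ^ 2 ≤ ρ ^ 2 * ‖e‖ ^ 2 := by
  have hcert := gramForm_nonpos hNSD ![a, b, c, e]
  rw [gramForm_add, gramForm_add, gramForm_add, gramForm_smul, gramForm_smul, gramForm_smul,
    W2mat_eq_transpose_mul_mul, Q1mat, Q2mat, Q3mat, gramForm_transpose_mul_mul,
    gramForm_transpose_mul_mul, gramForm_transpose_mul_mul, gramForm_transpose_mul_mul,
    lincomb_W2_factor, lincomb_BgMat hpg, lincomb_BhMat hph, lincomb_BfMat hpf,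
    gramForm_diag_one_neg, gramForm_smul_right, gramForm_smul_right, gramForm_smul_right]
    at hcert
  have := mul_nonneg hσ₁ (mul_nonneg (sq_nonneg α) hg)
  have := mul_nonneg hσ₂ (mul_nonneg (sq_nonneg α) hh)
  have := mul_nonneg hσ₃ (mul_nonneg (sq_nonneg α) hf)
  linarith

theorem tos_linear_convergence_general
    {d : ℕ}
    (m_f m_g m_h L_f L_g L_h : ℝ)
    (f g : EuclideanSpace ℝ (Fin d) → ℝ)
    (hgrad : EuclideanSpace ℝ (Fin d) → EuclideanSpace ℝ (Fin d))
    -- incremental quadratic constraints defining the classes F(m, L)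
    (hQCf : ∀ x y p q : EuclideanSpace ℝ (Fin d),
      (∀ w, f x + ⟪p, w - x⟫ ≤ f w) → (∀ w, f y + ⟪q, w - y⟫ ≤ f w) →
      m_f * L_f / (m_f + L_f) * ‖x - y‖ ^ 2 + 1 / (m_f + L_f) * ‖p - q‖ ^ 2 ≤
        ⟪p - q, x - y⟫)
    (hQCg : ∀ x y p q : EuclideanSpace ℝ (Fin d),
      (∀ w, g x + ⟪p, w - x⟫ ≤ g w) → (∀ w, g y + ⟪q, w - y⟫ ≤ g w) →
      m_g * L_g / (m_g + L_g) * ‖x - y‖ ^ 2 + 1 / (m_g + L_g) * ‖p - q‖ ^ 2 ≤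
        ⟪p - q, x - y⟫)
    (hQCh : ∀ x y : EuclideanSpace ℝ (Fin d),
      m_h * L_h / (m_h + L_h) * ‖x - y‖ ^ 2
        + 1 / (m_h + L_h) * ‖hgrad x - hgrad y‖ ^ 2 ≤ ⟪hgrad x - hgrad y, x - y⟫)
    (α lam ρ σ₁ σ₂ σ₃ : ℝ)
    (hσ₁ : 0 ≤ σ₁) (hσ₂ : 0 ≤ σ₂) (hσ₃ : 0 ≤ σ₃)
    (hNSD : ∀ v : Fin 4 → ℝ,
      v ⬝ᵥ ((W2mat lam ρ + σ₁ • Q1mat α m_g L_g + σ₂ • Q2mat α m_h L_h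
        + σ₃ • Q3mat α m_f L_f) *ᵥ v) ≤ 0)
    -- TOS trajectory
    (z xB y xA pg pf : ℕ → EuclideanSpace ℝ (Fin d))
    (hsubg : ∀ k w, g (xB k) + ⟪pg k, w - xB k⟫ ≤ g w)
    (hsubf : ∀ k w, f (xA k) + ⟪pf k, w - xA k⟫ ≤ f w)
    (hxB : ∀ k, xB k = z k - α • pg k)
    (hy : ∀ k, y k = (2 : ℝ) • xB k - z k - α • hgrad (xB k))
    (hxA : ∀ k, xA k = y k - α • pf k)
    (hz : ∀ k, z (k + 1) = z k + lam • (xA k - xB k))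
    -- TOS fixed point
    (zs xs ys pgs pfs : EuclideanSpace ℝ (Fin d))
    (hsubgs : ∀ w, g xs + ⟪pgs, w - xs⟫ ≤ g w)
    (hsubfs : ∀ w, f xs + ⟪pfs, w - xs⟫ ≤ f w)
    (hxs : xs = zs - α • pgs)
    (hys : ys = (2 : ℝ) • xs - zs - α • hgrad xs)
    (hxAs : xs = ys - α • pfs) :
    ∀ k : ℕ, ‖z k - zs‖ ^ 2 ≤ ρ ^ (2 * k) * ‖z 0 - zs‖ ^ 2 := by
  have step (k : ℕ) : ‖z (k + 1) - zs‖ ^ 2 ≤ ρ ^ 2 * ‖z k - zs‖ ^ 2 := by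
    have hcontr := tos_error_contraction hσ₁ hσ₂ hσ₃ hNSD
      (a := xB k - xs) (b := y k - ys) (c := xA k - xs) (e := z k - zs)
      (by rw [hxB, hxs]; module) (by rw [hy, hys]; module) (by rw [hxA, hxAs]; module)
      (gramForm_Qml_nonneg (hQCg _ _ _ _ (hsubg k) hsubgs))
      (gramForm_Qml_nonneg (hQCh (xB k) xs))
      (gramForm_Qml_nonneg (hQCf _ _ _ _ (hsubf k) hsubfs))
    have hz_err : z (k + 1) - zs = z k - zs + lam • (xA k - xs - (xB k - xs)) := by
      rw [hz]; module
    rwa [hz_err]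
  intro k
  rw [pow_mul]
  exact le_geom (u := fun k => ‖z k - zs‖ ^ 2) (sq_nonneg ρ) k fun j _ => step j

/-- **Theorem 3** (linear convergence of three-operator splitting). If
`W₂ + σ₁Q₁ + σ₂Q₂ + σ₃Q₃ ⪯ 0` for some `ρ ∈ (0,1)`, then along any TOS trajectory
admitting a fixed point, `‖z^k − z*‖² ≤ ρ^{2k} ‖z⁰ − z*‖²` for all `k`. -/
theorem tos_linear_convergence
    {d : ℕ} (hd : 1 ≤ d)
    (m_f m_g m_h L_f L_g L_h : ℝ)
    (hmf : 0 ≤ m_f) (hmg : 0 ≤ m_g) (hmh : 0 ≤ m_h)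
    (hLf : 0 < L_f) (hLg : 0 < L_g) (hLh : 0 < L_h)
    (f g h : EuclideanSpace ℝ (Fin d) → ℝ)
    (hgrad : EuclideanSpace ℝ (Fin d) → EuclideanSpace ℝ (Fin d))
    (hf : ConvexOn ℝ Set.univ f) (hg : ConvexOn ℝ Set.univ g)
    (hh : ConvexOn ℝ Set.univ h)
    (hdiff : ∀ x, HasGradientAt h (hgrad x) x)
    -- incremental quadratic constraints defining the classes F(m, L)
    (hQCf : ∀ x y p q : EuclideanSpace ℝ (Fin d),
      (∀ w, f x + ⟪p, w - x⟫ ≤ f w) → (∀ w, f y + ⟪q, w - y⟫ ≤ f w) →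
      m_f * L_f / (m_f + L_f) * ‖x - y‖ ^ 2 + 1 / (m_f + L_f) * ‖p - q‖ ^ 2 ≤
        ⟪p - q, x - y⟫)
    (hQCg : ∀ x y p q : EuclideanSpace ℝ (Fin d),
      (∀ w, g x + ⟪p, w - x⟫ ≤ g w) → (∀ w, g y + ⟪q, w - y⟫ ≤ g w) →
      m_g * L_g / (m_g + L_g) * ‖x - y‖ ^ 2 + 1 / (m_g + L_g) * ‖p - q‖ ^ 2 ≤
        ⟪p - q, x - y⟫)
    (hQCh : ∀ x y : EuclideanSpace ℝ (Fin d),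
      m_h * L_h / (m_h + L_h) * ‖x - y‖ ^ 2
        + 1 / (m_h + L_h) * ‖hgrad x - hgrad y‖ ^ 2 ≤ ⟪hgrad x - hgrad y, x - y⟫)
    (α lam ρ σ₁ σ₂ σ₃ : ℝ)
    (hα : 0 < α) (hlam : 0 < lam) (hρ : ρ ∈ Set.Ioo (0 : ℝ) 1)
    (hσ₁ : 0 ≤ σ₁) (hσ₂ : 0 ≤ σ₂) (hσ₃ : 0 ≤ σ₃)
    (hNSD : ∀ v : Fin 4 → ℝ,
      v ⬝ᵥ ((W2mat lam ρ + σ₁ • Q1mat α m_g L_g + σ₂ • Q2mat α m_h L_h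
        + σ₃ • Q3mat α m_f L_f) *ᵥ v) ≤ 0)
    -- TOS trajectory
    (z xB y xA pg pf : ℕ → EuclideanSpace ℝ (Fin d))
    (hsubg : ∀ k w, g (xB k) + ⟪pg k, w - xB k⟫ ≤ g w)
    (hsubf : ∀ k w, f (xA k) + ⟪pf k, w - xA k⟫ ≤ f w)
    (hxB : ∀ k, xB k = z k - α • pg k)
    (hy : ∀ k, y k = (2 : ℝ) • xB k - z k - α • hgrad (xB k))
    (hxA : ∀ k, xA k = y k - α • pf k)
    (hz : ∀ k, z (k + 1) = z k + lam • (xA k - xB k))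
    -- TOS fixed point
    (zs xs ys pgs pfs : EuclideanSpace ℝ (Fin d))
    (hsubgs : ∀ w, g xs + ⟪pgs, w - xs⟫ ≤ g w)
    (hsubfs : ∀ w, f xs + ⟪pfs, w - xs⟫ ≤ f w)
    (hxs : xs = zs - α • pgs)
    (hys : ys = (2 : ℝ) • xs - zs - α • hgrad xs)
    (hxAs : xs = ys - α • pfs) :
    ∀ k : ℕ, ‖z k - zs‖ ^ 2 ≤ ρ ^ (2 * k) * ‖z 0 - zs‖ ^ 2 :=
  tos_linear_convergence_general m_f m_g m_h L_f L_g L_h f g hgrad hQCf hQCg hQCh α lam ρ σ₁ σ₂ σ₃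
    hσ₁ hσ₂ hσ₃ hNSD z xB y xA pg pf hsubg hsubf hxB hy hxA hz zs xs ys pgs pfs hsubgs hsubfs hxs
    hys hxAs
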